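/- arXiv:math/0206114 — 2 statements merged into one kernel-verified Lean document; each statement's English description precedes it below -/
import Mathlib

section
/- With Φ : W → W the linear map defined by Φ(l_n) = −3 l_{n−2} for n even and Φ(l_n) = −(3/2) l_{n−2} for n odd, one has ω = d₁Φ, where ω(l_n,l_m) = 0 for n,m odd, ω(l_n,l_m) = 3(m−n) l_{n+m−2} for n,m even, ω(l_n,l_m) = 3(m−n−1) l_{n+m−2} for n odd, m even. Hence the cohomology class [ω] ∈ H²(W,W) vanishes. -/
noncomputable section

/-- Bilinear extension of structure constants `C` to a bracket on `ℤ →₀ ℂ`. -/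
def br (C : ℤ → ℤ → (ℤ →₀ ℂ)) (x y : ℤ →₀ ℂ) : ℤ →₀ ℂ :=
  x.sum fun n a => y.sum fun m b => (a * b) • C n m

/-- Structure constants of the Witt algebra: `[l_n, l_m] = (m - n) l_{n+m}`. -/
def wittC (n m : ℤ) : ℤ →₀ ℂ := Finsupp.single (n + m) ((m : ℂ) - (n : ℂ))

/-- The cochain `ω`: `0` for `n,m` odd, `3(m-n) l_{n+m-2}` for `n,m` even,
`3(m-n-1) l_{n+m-2}` for `n` odd, `m` even, extended skew-symmetrically. -/
def omC (n m : ℤ) : ℤ →₀ ℂ :=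
  if Odd n then
    if Odd m then 0
    else Finsupp.single (n + m - 2) (3 * ((m : ℂ) - n - 1))
  else
    if Odd m then -Finsupp.single (n + m - 2) (3 * ((n : ℂ) - m - 1))
    else Finsupp.single (n + m - 2) (3 * ((m : ℂ) - n))

/-- The linear map `Φ(l_n) = -3 l_{n-2}` for `n` even, `Φ(l_n) = -(3/2) l_{n-2}` for `n` odd. -/
def Phi (x : ℤ →₀ ℂ) : ℤ →₀ ℂ :=
  x.sum fun n a => Finsupp.single (n - 2) (a * (if Even n then (-3 : ℂ) else -3 / 2))


/-! Both sides are additive in each argument, so it suffices to compare them on `l_n, l_m`.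
There `d₁Φ(l_n, l_m)` is the multiple of `l_{n+m-2}` with coefficient
`(m - n) φ(n + m) - (m - n + 2) φ(n) - (m - n - 2) φ(m)`, where `Φ(l_n) = φ(n) l_{n-2}`,
and a check of the four parity cases of `n, m` shows that this is the coefficient of `ω(l_n, l_m)`. -/

section Bracket

variable (C : ℤ → ℤ → (ℤ →₀ ℂ))

lemma br_zero_left (y : ℤ →₀ ℂ) : br C 0 y = 0 := by
  simp [br]

lemma br_zero_right (x : ℤ →₀ ℂ) : br C x 0 = 0 := by
  simp [br]

lemma br_add_left (x x' y : ℤ →₀ ℂ) : br C (x + x') y = br C x y + br C x' y := by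
  refine Finsupp.sum_add_index' (fun n => by simp) fun n a a' => ?_
  rw [← Finsupp.sum_add]
  exact Finsupp.sum_congr fun m _ => by rw [add_mul, add_smul]

lemma br_add_right (x y y' : ℤ →₀ ℂ) : br C x (y + y') = br C x y + br C x y' := by
  rw [br, br, br, ← Finsupp.sum_add]
  refine Finsupp.sum_congr fun n _ => Finsupp.sum_add_index' (fun m => by simp) fun m b b' => ?_
  rw [mul_add, add_smul]

lemma br_single_single (n m : ℤ) (a b : ℂ) :
    br C (Finsupp.single n a) (Finsupp.single m b) = (a * b) • C n m := by
  simp [br, Finsupp.sum_single_index]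

end Bracket

def phiCoeff (n : ℤ) : ℂ := if Even n then -3 else -3 / 2

lemma phiCoeff_of_even {n : ℤ} (h : Even n) : phiCoeff n = -3 := if_pos h

lemma phiCoeff_of_odd {n : ℤ} (h : Odd n) : phiCoeff n = -3 / 2 :=
  if_neg (Int.not_even_iff_odd.mpr h)

lemma Phi_zero : Phi 0 = 0 := by simp [Phi]

lemma Phi_add (x x' : ℤ →₀ ℂ) : Phi (x + x') = Phi x + Phi x' :=
  Finsupp.sum_add_index' (fun n => by simp) fun n a a' => by rw [add_mul, Finsupp.single_add]

lemma Phi_single (n : ℤ) (a : ℂ) :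
    Phi (Finsupp.single n a) = Finsupp.single (n - 2) (a * phiCoeff n) := by
  simp [Phi, phiCoeff, Finsupp.sum_single_index]

lemma omC_eq_single (n m : ℤ) :
    omC n m = Finsupp.single (n + m - 2)
      (((m : ℂ) - n) * phiCoeff (n + m) - ((m : ℂ) - n + 2) * phiCoeff n
        - ((m : ℂ) - n - 2) * phiCoeff m) := by
  rcases Int.even_or_odd n with hn | hn <;> rcases Int.even_or_odd m with hm | hm
  · rw [omC, if_neg (Int.not_odd_iff_even.mpr hn), if_neg (Int.not_odd_iff_even.mpr hm),
      phiCoeff_of_even hn, phiCoeff_of_even hm, phiCoeff_of_even (hn.add hm)]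
    congr 1; ring
  · rw [omC, if_neg (Int.not_odd_iff_even.mpr hn), if_pos hm, ← Finsupp.single_neg,
      phiCoeff_of_even hn, phiCoeff_of_odd hm, phiCoeff_of_odd (hn.add_odd hm)]
    congr 1; ring
  · rw [omC, if_pos hn, if_neg (Int.not_odd_iff_even.mpr hm),
      phiCoeff_of_odd hn, phiCoeff_of_even hm, phiCoeff_of_odd (hn.add_even hm)]
    congr 1; ring
  · rw [omC, if_pos hn, if_pos hm, phiCoeff_of_odd hn, phiCoeff_of_odd hm,
      phiCoeff_of_even (hn.add_odd hm), eq_comm, Finsupp.single_eq_zero]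
    ring

lemma br_omC_single_single (n m : ℤ) (a b : ℂ) :
    br omC (Finsupp.single n a) (Finsupp.single m b) =
      Phi (br wittC (Finsupp.single n a) (Finsupp.single m b))
        - br wittC (Phi (Finsupp.single n a)) (Finsupp.single m b)
        - br wittC (Finsupp.single n a) (Phi (Finsupp.single m b)) := by
  simp only [br_single_single, Phi_single, wittC, omC_eq_single, Finsupp.smul_single, smul_eq_mul]
  rw [show n - 2 + m = n + m - 2 by ring, show n + (m - 2) = n + m - 2 by ring,
    ← Finsupp.single_sub, ← Finsupp.single_sub]
  congr 1
  push_cast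
  ring

/-- `ω = d₁Φ`, hence the cohomology class `[ω] ∈ H²(W,W)` vanishes. -/
theorem omega_is_coboundary (x y : ℤ →₀ ℂ) :
    br omC x y = Phi (br wittC x y) - br wittC (Phi x) y - br wittC x (Phi y) := by
  induction x using Finsupp.induction_linear with
  | zero => simp [br_zero_left, Phi_zero]
  | add x x' hx hx' =>
    simp only [br_add_left, Phi_add, hx, hx']
    abel
  | single n a =>
    induction y using Finsupp.induction_linear with
    | zero => simp [br_zero_right, Phi_zero]
    | add y y' hy hy' =>
      simp only [br_add_right, Phi_add, hy, hy']
      abel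
    | single m b => exact br_omC_single_single n m a b
end
end

section
/- The bilinear map β on L₁ defined by β(l₂, l_m) = m l_m for m ≠ 2, β(l_n, l_m) = 0 if neither n nor m equals 2 (extended skew-symmetrically), is a 2-cocycle of L₁ with values in the adjoint module whose cohomology class in H²(L₁, L₁) is non-zero, i.e., β is a cocycle and there is no linear map Φ : L₁ → L₁ with β = d₁Φ. -/
/-!
Write `ε x` for the coefficient of `l₂` in `x` and `D` for the degree derivation `D l_m = m l_m`.
Then `β(x, y) = ε(x) D y - ε(y) D x`. Since `ε` vanishes on `[L₁, L₁]` (the only bracket landing in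
degree 2 is `[l₁, l₁] = 0`) and `D` is a derivation, such a cup product is a 2-cocycle for any
antisymmetric bracket.

If `β = d₁Φ`, let `φ p q` be the coefficient of `l_q` in `Φ l_p`. Comparing the coefficients of
`l₁, l₃, l₂, l₃` in `β(l₂, l₁), β(l₂, l₃), β(l₁, l₃), β(l₁, l₄)` gives
`1 = -φ 3 1`, `3 = φ 5 3 + φ 3 1`, `0 = 2 φ 4 2` and `0 = 3 φ 5 3 - φ 4 2`, which are inconsistent.
-/

noncomputable section

/-- Index set for `L₁`: integers `n ≥ 1`. -/
abbrev PosIdx : Type := {n : ℤ // 1 ≤ n}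

/-- Bilinear extension of structure constants `C` to a bracket on the free module. -/
def brP (C : PosIdx → PosIdx → (PosIdx →₀ ℂ)) (x y : PosIdx →₀ ℂ) : PosIdx →₀ ℂ :=
  x.sum fun n a => y.sum fun m b => (a * b) • C n m

/-- Structure constants of `L₁`: `[l_n, l_m] = (m-n) l_{n+m}`. -/
def L1C (n m : PosIdx) : PosIdx →₀ ℂ :=
  Finsupp.single ⟨n.1 + m.1, by have := n.2; have := m.2; omega⟩ ((m.1 : ℂ) - (n.1 : ℂ))

/-- The cochain `β⁽³⁾`: `β(l₂,l_m) = m l_m` for `m ≠ 2`, zero if no index equals `2`,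
extended skew-symmetrically. -/
def betaC (n m : PosIdx) : PosIdx →₀ ℂ :=
  if n.1 = 2 ∧ m.1 ≠ 2 then Finsupp.single m (m.1 : ℂ)
  else if m.1 = 2 ∧ n.1 ≠ 2 then -Finsupp.single n (n.1 : ℂ)
  else 0

section Cohomology

variable {R M : Type*} [CommRing R] [AddCommGroup M] [Module R M]

def IsTwoCocycle (br β : M → M → M) : Prop :=
  ∀ x y z, β (br x y) z + β (br y z) x + β (br z x) y
    - br x (β y z) - br y (β z x) - br z (β x y) = 0

variable (R) in
def IsTwoCoboundary (br β : M → M → M) : Prop :=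
  ∃ Φ : M →ₗ[R] M, ∀ x y, β x y = Φ (br x y) - br (Φ x) y - br x (Φ y)

def cup (f : M →ₗ[R] R) (D : M →ₗ[R] M) : M →ₗ[R] M →ₗ[R] M :=
  f.smulRight D - (f.smulRight D).flip

@[simp]
lemma cup_apply (f : M →ₗ[R] R) (D : M →ₗ[R] M) (x y : M) :
    cup f D x y = f x • D y - f y • D x := rfl

theorem isTwoCocycle_cup (B : M →ₗ[R] M →ₗ[R] M) (hB : ∀ x y, B y x = -B x y)
    (f : M →ₗ[R] R) (hf : ∀ x y, f (B x y) = 0)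
    (D : M →ₗ[R] M) (hD : ∀ x y, D (B x y) = B (D x) y + B x (D y)) :
    IsTwoCocycle (fun x y => B x y) (fun x y => cup f D x y) := by
  intro x y z
  simp only [cup_apply, hf, hD, map_sub, map_smul, zero_smul]
  rw [hB (D x) y, hB (D y) z, hB (D z) x]
  module

end Cohomology

lemma Finsupp.bilinear_ext_single {ι R N : Type*} [CommSemiring R] [AddCommMonoid N] [Module R N]
    {B B' : (ι →₀ R) →ₗ[R] (ι →₀ R) →ₗ[R] N}
    (h : ∀ n m, B (single n 1) (single m 1) = B' (single n 1) (single m 1)) : B = B' :=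
  LinearMap.ext_basis Finsupp.basisSingleOne Finsupp.basisSingleOne (by simpa using h)

instance (n : ℕ) [NeZero n] : OfNat PosIdx n := ⟨⟨n, by have := NeZero.ne n; omega⟩⟩

@[simp]
lemma PosIdx.coe_ofNat (n : ℕ) [NeZero n] :
    ((no_index (OfNat.ofNat n : PosIdx)) : ℤ) = OfNat.ofNat n := rfl

def brPₗ (C : PosIdx → PosIdx → (PosIdx →₀ ℂ)) :
    (PosIdx →₀ ℂ) →ₗ[ℂ] (PosIdx →₀ ℂ) →ₗ[ℂ] (PosIdx →₀ ℂ) :=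
  Finsupp.lsum ℂ fun n => LinearMap.toSpanSingleton ℂ _
    (Finsupp.lsum ℂ fun m => LinearMap.toSpanSingleton ℂ _ (C n m))

section Bracket

variable (C : PosIdx → PosIdx → (PosIdx →₀ ℂ))

lemma brPₗ_apply (x y : PosIdx →₀ ℂ) : brPₗ C x y = brP C x y := by
  simp [brPₗ, brP, Finsupp.lsum_apply, LinearMap.finsupp_sum_apply, Finsupp.smul_sum, smul_smul]

lemma brP_single_single (n m : PosIdx) (a b : ℂ) :
    brP C (Finsupp.single n a) (Finsupp.single m b) = (a * b) • C n m := by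
  simp [brP]

lemma brPₗ_single_single (n m : PosIdx) (a b : ℂ) :
    brPₗ C (Finsupp.single n a) (Finsupp.single m b) = (a * b) • C n m := by
  rw [brPₗ_apply, brP_single_single]

lemma brP_single_left (n : PosIdx) (v : PosIdx →₀ ℂ) :
    brP C (Finsupp.single n 1) v = v.sum fun p c => c • C n p := by
  simp [brP]

end Bracket

lemma L1C_eq_single {n m p : PosIdx} (hp : n.1 + m.1 = p.1) :
    L1C n m = Finsupp.single p ((m.1 : ℂ) - n.1) := by
  simp only [L1C]
  congr 1
  exact Subtype.ext hp

lemma L1C_swap (n m : PosIdx) : L1C m n = -L1C n m := by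
  rw [L1C, L1C, ← Finsupp.single_neg, neg_sub]
  congr 1
  exact Subtype.ext (add_comm _ _)

lemma brP_L1C_swap (x y : PosIdx →₀ ℂ) : brP L1C y x = -brP L1C x y := by
  suffices (brPₗ L1C).flip = (brPₗ L1C).compr₂ (-LinearMap.id) by
    simpa [brPₗ_apply] using LinearMap.congr_fun₂ this x y
  refine Finsupp.bilinear_ext_single fun n m => ?_
  simp only [LinearMap.flip_apply, LinearMap.compr₂_apply, brPₗ_single_single, L1C_swap n m,
    LinearMap.neg_apply, LinearMap.id_apply, smul_neg]

lemma brP_L1C_apply_two (x y : PosIdx →₀ ℂ) : brP L1C x y 2 = 0 := by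
  suffices (brPₗ L1C).compr₂ (Finsupp.lapply 2) = 0 by
    simpa [brPₗ_apply] using LinearMap.congr_fun₂ this x y
  refine Finsupp.bilinear_ext_single fun n m => ?_
  have hn := n.2
  have hm := m.2
  simp only [LinearMap.compr₂_apply, brPₗ_single_single, L1C, Finsupp.lapply_apply, one_mul,
    one_smul, Finsupp.single_apply, Subtype.ext_iff, PosIdx.coe_ofNat, LinearMap.zero_apply]
  split_ifs with h
  · rw [show n.1 = 1 by omega, show m.1 = 1 by omega, sub_self]
  · rfl

def degreeDeriv : (PosIdx →₀ ℂ) →ₗ[ℂ] (PosIdx →₀ ℂ) :=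
  Finsupp.lsum ℂ fun n => (n.1 : ℂ) • Finsupp.lsingle n

lemma degreeDeriv_single (n : PosIdx) (a : ℂ) :
    degreeDeriv (Finsupp.single n a) = Finsupp.single n (n.1 * a) := by
  simp [degreeDeriv]

lemma degreeDeriv_brP_L1C (x y : PosIdx →₀ ℂ) :
    degreeDeriv (brP L1C x y) = brP L1C (degreeDeriv x) y + brP L1C x (degreeDeriv y) := by
  suffices (brPₗ L1C).compr₂ degreeDeriv
      = brPₗ L1C ∘ₗ degreeDeriv + (brPₗ L1C).compl₂ degreeDeriv by
    simpa [brPₗ_apply] using LinearMap.congr_fun₂ this x y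
  refine Finsupp.bilinear_ext_single fun n m => ?_
  simp only [LinearMap.compr₂_apply, LinearMap.add_apply, LinearMap.comp_apply,
    LinearMap.compl₂_apply, degreeDeriv_single, brPₗ_single_single, L1C, Finsupp.smul_single,
    smul_eq_mul, ← Finsupp.single_add]
  congr 1
  push_cast
  ring

lemma brP_betaC_eq_cup (x y : PosIdx →₀ ℂ) :
    brP betaC x y = cup (Finsupp.lapply 2) degreeDeriv x y := by
  suffices brPₗ betaC = cup (Finsupp.lapply 2) degreeDeriv by
    simpa [brPₗ_apply] using LinearMap.congr_fun₂ this x y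
  refine Finsupp.bilinear_ext_single fun n m => ?_
  simp only [brPₗ_single_single, cup_apply, degreeDeriv_single, Finsupp.lapply_apply,
    Finsupp.single_apply, Subtype.ext_iff, betaC]
  rw [one_mul, one_smul]
  by_cases hn : n.1 = 2 <;> by_cases hm : m.1 = 2
  · obtain rfl : n = m := Subtype.ext (hn.trans hm.symm)
    simp [hn]
  all_goals simp [hn, hm]

theorem isTwoCocycle_betaC : IsTwoCocycle (brP L1C) (brP betaC) := by
  have hL : (fun x y => brPₗ L1C x y) = brP L1C := funext₂ (brPₗ_apply L1C)
  have hβ : (fun x y => cup (Finsupp.lapply 2) degreeDeriv x y) = brP betaC :=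
    funext₂ fun x y => (brP_betaC_eq_cup x y).symm
  rw [← hL, ← hβ]
  refine isTwoCocycle_cup _ ?_ _ ?_ _ ?_ <;> simp only [brPₗ_apply]
  exacts [brP_L1C_swap, brP_L1C_apply_two, degreeDeriv_brP_L1C]

lemma brP_L1C_single_apply {n p q : PosIdx} (hq : n.1 + p.1 = q.1) (v : PosIdx →₀ ℂ) :
    brP L1C (Finsupp.single n 1) v q = (p.1 - n.1) * v p := by
  rw [brP_single_left, Finsupp.sum_apply, Finsupp.sum_eq_single p]
  · simp [L1C_eq_single hq, mul_comm]
  · intro r _ hr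
    have : n.1 + r.1 ≠ q.1 := fun h => hr (Subtype.ext (by omega))
    simp [L1C, Subtype.ext_iff, this]
  · simp

lemma brP_L1C_single_apply_of_le {n q : PosIdx} (hq : q.1 ≤ n.1) (v : PosIdx →₀ ℂ) :
    brP L1C (Finsupp.single n 1) v q = 0 := by
  rw [brP_single_left, Finsupp.sum_apply]
  refine Finset.sum_eq_zero fun r _ => ?_
  have : n.1 + r.1 ≠ q.1 := by have := r.2; omega
  simp [L1C, Subtype.ext_iff, this]

lemma betaC_apply_eq_of_isCoboundary {Φ : (PosIdx →₀ ℂ) →ₗ[ℂ] (PosIdx →₀ ℂ)}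
    (hΦ : ∀ x y, brP betaC x y = Φ (brP L1C x y) - brP L1C (Φ x) y - brP L1C x (Φ y))
    {n m p : PosIdx} (hp : n.1 + m.1 = p.1) (q : PosIdx) :
    betaC n m q = (m.1 - n.1) * Φ (Finsupp.single p 1) q
      + brP L1C (Finsupp.single m 1) (Φ (Finsupp.single n 1)) q
      - brP L1C (Finsupp.single n 1) (Φ (Finsupp.single m 1)) q := by
  have h := hΦ (Finsupp.single n 1) (Finsupp.single m 1)
  rw [brP_single_single, brP_single_single, one_mul, one_smul, one_smul,
    brP_L1C_swap (Finsupp.single m 1), L1C_eq_single hp, ← Finsupp.smul_single_one,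
    map_smul] at h
  rw [h, sub_neg_eq_add, Finsupp.sub_apply, Finsupp.add_apply, Finsupp.smul_apply, smul_eq_mul]

theorem not_isTwoCoboundary_betaC : ¬ IsTwoCoboundary ℂ (brP L1C) (brP betaC) := by
  rintro ⟨Φ, hΦ⟩
  have e21 := betaC_apply_eq_of_isCoboundary hΦ (n := 2) (m := 1) (p := 3) (by norm_num) 1
  have e23 := betaC_apply_eq_of_isCoboundary hΦ (n := 2) (m := 3) (p := 5) (by norm_num) 3
  have e13 := betaC_apply_eq_of_isCoboundary hΦ (n := 1) (m := 3) (p := 4) (by norm_num) 2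
  have e14 := betaC_apply_eq_of_isCoboundary hΦ (n := 1) (m := 4) (p := 5) (by norm_num) 3
  rw [brP_L1C_single_apply_of_le (by norm_num), brP_L1C_single_apply_of_le (by norm_num)] at e21
  rw [brP_L1C_single_apply_of_le (by norm_num), brP_L1C_single_apply (p := 1) (by norm_num)] at e23
  rw [brP_L1C_single_apply_of_le (by norm_num), brP_L1C_single_apply (p := 1) (by norm_num)] at e13
  rw [brP_L1C_single_apply_of_le (by norm_num), brP_L1C_single_apply (p := 2) (by norm_num)] at e14
  norm_num [betaC, Finsupp.single_apply] at e21 e23 e13 e14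
  have : (4 : ℂ) = 0 := by linear_combination e23 + e21 - e14 / 3 + e13 / 3
  norm_num at this

/-- `β` is a 2-cocycle of `L₁` with values in the adjoint module, and it is not a
coboundary: its class in `H²(L₁,L₁)` is nonzero. -/
theorem beta_cocycle_not_coboundary :
    (∀ x y z : PosIdx →₀ ℂ,
      brP betaC (brP L1C x y) z + brP betaC (brP L1C y z) x + brP betaC (brP L1C z x) y
        - brP L1C x (brP betaC y z) - brP L1C y (brP betaC z x)
        - brP L1C z (brP betaC x y) = 0) ∧
    ¬ ∃ Φ : (PosIdx →₀ ℂ) →ₗ[ℂ] (PosIdx →₀ ℂ),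
        ∀ x y : PosIdx →₀ ℂ,
          brP betaC x y = Φ (brP L1C x y) - brP L1C (Φ x) y - brP L1C x (Φ y) :=
  ⟨isTwoCocycle_betaC, not_isTwoCoboundary_betaC⟩
end
end
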